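/- arXiv:cs/0602027 — 4 statements merged into one kernel-verified Lean document; each statement's English description precedes it below -/
import Mathlib

section
/- Let (D, ⊑) be a finite partial order with least element ⊥, and let F be a finite set of functions on D, each monotonic and inflationary. Then every execution of the Generic Iteration algorithm (starting with d := ⊥ and G := F, repeatedly choosing g ∈ G; if g(d) ≠ d then setting d := g(d) and adding to G all functions f ∉ G with f(d) = d but f(g(d)) ≠ g(d), else removing g from G) terminates, and upon termination d is the least common fixpoint of all functions in F. -/
/-!
Along every execution the state `(d, G)` satisfies `G ⊆ F`, every `f ∈ F \ G` fixes `d`, and `d`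
lies below every common fixpoint (the last part because each `g` is monotone and `d ≤ e` gives
`g d ≤ g e = e`). A terminal state has `G = ∅`, so there `d` is the least common fixpoint.
Termination: an update step strictly increases `d` (as `g` is inflationary), and a removal step
keeps `d` and shrinks `G`, so the pair (number of elements above `d`, size of `G`) decreases
lexicographically.
-/

namespace GenericIteration

variable {D : Type*}

def Step (F : Set (D → D)) (s s' : D × Set (D → D)) : Prop :=
  ∃ g ∈ s.2,
    (g s.1 ≠ s.1 ∧
      s' = (g s.1, s.2 ∪ {f | f ∈ F ∧ f ∉ s.2 ∧ f s.1 = s.1 ∧ f (g s.1) ≠ g s.1})) ∨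
    (g s.1 = s.1 ∧ s' = (s.1, s.2 \ {g}))

variable {F : Set (D → D)} {s s' : D × Set (D → D)}

theorem Step.subset (h : Step F s s') (hs : s.2 ⊆ F) : s'.2 ⊆ F := by
  obtain ⟨g, -, ⟨-, rfl⟩ | ⟨-, rfl⟩⟩ := h
  · exact Set.union_subset hs fun f hf => hf.1
  · exact Set.sdiff_subset.trans hs

theorem Step.map_eq_of_notMem (h : Step F s s') (hfix : ∀ f ∈ F, f ∉ s.2 → f s.1 = s.1) :
    ∀ f ∈ F, f ∉ s'.2 → f s'.1 = s'.1 := by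
  obtain ⟨g, -, ⟨-, rfl⟩ | ⟨hg, rfl⟩⟩ := h
  · intro f hf hnf
    have hf_old : f ∉ s.2 := fun h => hnf (Or.inl h)
    by_contra hc
    exact hnf (Or.inr ⟨hf, hf_old, hfix f hf hf_old, hc⟩)
  · intro f hf hnf
    by_cases hfg : f = g
    · exact hfg ▸ hg
    · exact hfix f hf fun h => hnf ⟨h, hfg⟩

section PartialOrder

variable [PartialOrder D]

theorem Step.mem_lowerBounds (hmono : ∀ f ∈ F, Monotone f) (h : Step F s s') (hs : s.2 ⊆ F)
    (hlb : s.1 ∈ lowerBounds {d | ∀ f ∈ F, f d = d}) :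
    s'.1 ∈ lowerBounds {d | ∀ f ∈ F, f d = d} := by
  obtain ⟨g, hg, ⟨-, rfl⟩ | ⟨-, rfl⟩⟩ := h
  · intro d hd
    calc g s.1 ≤ g d := hmono g (hs hg) (hlb hd)
      _ = d := hd g (hs hg)
  · exact hlb

/-- Weighting by `F.ncard + 1` makes growth of `d` outweigh any growth of the worklist. -/
noncomputable def potential (F : Set (D → D)) (s : D × Set (D → D)) : ℕ :=
  (Set.Ici s.1).ncard * (F.ncard + 1) + s.2.ncard

theorem Step.potential_lt [Finite D] (hF : F.Finite) (hinfl : ∀ f ∈ F, ∀ x, x ≤ f x)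
    (h : Step F s s') (hs : s.2 ⊆ F) : potential F s' < potential F s := by
  have hG_le : s'.2.ncard ≤ F.ncard := Set.ncard_le_ncard (h.subset hs) hF
  obtain ⟨g, hg, ⟨hne, rfl⟩ | ⟨-, rfl⟩⟩ := h
  · have hlt : s.1 < g s.1 := (hinfl g (hs hg) s.1).lt_of_ne' hne
    have hIci : (Set.Ici (g s.1)).ncard < (Set.Ici s.1).ncard :=
      Set.ncard_lt_ncard (Set.Ici_ssubset_Ici.mpr hlt)
    simp only [potential]
    nlinarith
  · have hG : (s.2 \ {g}).ncard < s.2.ncard :=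
      Set.ncard_sdiff_singleton_lt_of_mem hg (hF.subset hs)
    simp only [potential]
    omega

structure Invariant (F : Set (D → D)) (s : D × Set (D → D)) : Prop where
  subset : s.2 ⊆ F
  map_eq_of_notMem : ∀ f ∈ F, f ∉ s.2 → f s.1 = s.1
  mem_lowerBounds : s.1 ∈ lowerBounds {d | ∀ f ∈ F, f d = d}

theorem invariant_bot_self [OrderBot D] : Invariant F (⊥, F) :=
  ⟨subset_rfl, fun _ hf hnf => absurd hf hnf, fun _ _ => bot_le⟩

theorem Step.invariant (hmono : ∀ f ∈ F, Monotone f) (h : Step F s s') (hs : Invariant F s) :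
    Invariant F s' :=
  ⟨h.subset hs.subset, h.map_eq_of_notMem hs.map_eq_of_notMem,
    h.mem_lowerBounds hmono hs.subset hs.mem_lowerBounds⟩

theorem Invariant.isLeast_of_empty (hs : Invariant F s) (hG : s.2 = ∅) :
    IsLeast {d | ∀ f ∈ F, f d = d} s.1 :=
  ⟨fun f hf => hs.map_eq_of_notMem f hf (hG ▸ Set.notMem_empty f), hs.mem_lowerBounds⟩

end PartialOrder

section Chains

variable {α : Type*} {r : α → α → Prop} {P : α → Prop}

theorem forall_le_of_chain (hP : ∀ a b, r a b → P a → P b) {e : ℕ → α} {k : ℕ} (h0 : P (e 0))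
    (he : ∀ n < k, r (e n) (e (n + 1))) : ∀ n ≤ k, P (e n) := by
  intro n hn
  induction n with
  | zero => exact h0
  | succ n ih => exact hP _ _ (he n hn) (ih (Nat.le_of_succ_le hn))

theorem not_forall_chain_of_potential (μ : α → ℕ) (hP : ∀ a b, r a b → P a → P b)
    (hμ : ∀ a b, r a b → P a → μ b < μ a) {e : ℕ → α} (h0 : P (e 0)) :
    ¬ ∀ n, r (e n) (e (n + 1)) := by
  intro he
  have hPe (n : ℕ) : P (e n) := forall_le_of_chain hP h0 (fun m _ => he m) n le_rfl
  obtain ⟨n, hn⟩ := WellFounded.not_rel_apply_succ (r := (· < ·)) (fun n => μ (e n))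
  exact hn (hμ _ _ (he n) (hPe n))

end Chains

end GenericIteration

open GenericIteration in
/-- Generic Iteration: states are pairs (d, G); one step chooses g ∈ G,
and if g d ≠ d updates d to g d and adds to G all f ∉ G with f d = d but
f (g d) ≠ g d; otherwise removes g from G. Every execution terminates,
and any terminal state (G = ∅) reachable from (⊥, F) carries the least
common fixpoint of F. -/
theorem generic_iteration_correct {D : Type*} [PartialOrder D] [Fintype D] [OrderBot D]
    (F : Set (D → D)) (hF : F.Finite)
    (hmono : ∀ f ∈ F, Monotone f) (hinfl : ∀ f ∈ F, ∀ x, x ≤ f x)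
    (step : (D × Set (D → D)) → (D × Set (D → D)) → Prop)
    (hstep : ∀ s s', step s s' ↔ ∃ g ∈ s.2,
      (g s.1 ≠ s.1 ∧
        s' = (g s.1, s.2 ∪ {f | f ∈ F ∧ f ∉ s.2 ∧ f s.1 = s.1 ∧ f (g s.1) ≠ g s.1})) ∨
      (g s.1 = s.1 ∧ s' = (s.1, s.2 \ {g}))) :
    (¬ ∃ e : ℕ → D × Set (D → D), e 0 = (⊥, F) ∧ ∀ n, step (e n) (e (n + 1))) ∧
    (∀ (k : ℕ) (e : ℕ → D × Set (D → D)), e 0 = (⊥, F) →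
      (∀ n < k, step (e n) (e (n + 1))) → (e k).2 = ∅ →
      (∀ f ∈ F, f (e k).1 = (e k).1) ∧
      ∀ d : D, (∀ f ∈ F, f d = d) → (e k).1 ≤ d) := by
  obtain rfl : step = Step F := by
    ext s s'
    exact hstep s s'
  refine ⟨?_, fun k e he0 he hterm => ?_⟩
  · rintro ⟨e, he0, he⟩
    refine not_forall_chain_of_potential (potential F) (fun _ _ h hs => h.subset hs)
      (fun _ _ h hs => h.potential_lt hF hinfl hs) (he0 ▸ subset_rfl) he
  · have hinv := forall_le_of_chain (fun _ _ h hs => h.invariant hmono hs)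
      (he0 ▸ invariant_bot_self) he k le_rfl
    exact hinv.isLeast_of_empty hterm
end

section
/- Let (D, ⊑) be a finite partial order with least element ⊥ and let F be a finite set of monotonic inflationary functions on D. Then the set of common fixpoints of F has a least element, namely the limit of the (eventually stabilizing) sequence obtained by iterating functions from F starting at ⊥ in any fair order. -/
/-!
Since every function is inflationary, the iterates form an increasing chain, which stabilizes
because `D` is finite. Fairness applies every `f ∈ F` again after stabilization, so the limit is a
common fixpoint; and since every function is monotone, an induction keeps every iterate below any
common fixpoint.
-/

section FairIteration

variable {α : Type*} {σ : ℕ → α → α} {e : ℕ → α}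

theorem monotone_of_iterate_inflationary [Preorder α] (hσ : ∀ n x, x ≤ σ n x)
    (he : ∀ n, e (n + 1) = σ n (e n)) : Monotone e :=
  monotone_nat_of_le_succ fun n => (he n).symm ▸ hσ n (e n)

theorem iterate_le_of_forall_fixed [Preorder α] {d : α} (h0 : e 0 ≤ d)
    (hmono : ∀ n, Monotone (σ n)) (hfix : ∀ n, σ n d = d)
    (he : ∀ n, e (n + 1) = σ n (e n)) (n : ℕ) : e n ≤ d := by
  induction n with
  | zero => exact h0
  | succ n ih =>
    calc e (n + 1) = σ n (e n) := he n
      _ ≤ σ n d := hmono n ih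
      _ = d := hfix n

theorem apply_eq_of_iterate_stable (he : ∀ n, e (n + 1) = σ n (e n)) {N : ℕ}
    (hN : ∀ n ≥ N, e n = e N) {f : α → α} {n : ℕ} (hn : N ≤ n) (hσn : σ n = f) :
    f (e N) = e N := by
  rw [← hσn, ← hN n hn, ← he n, hN (n + 1) (by omega), hN n hn]

end FairIteration

theorem least_common_fixpoint_of_fair_iteration_general {D : Type*} [PartialOrder D]
    [Fintype D] [OrderBot D]
    (F : Set (D → D))
    (hmono : ∀ f ∈ F, Monotone f) (hinfl : ∀ f ∈ F, ∀ x, x ≤ f x)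
    (σ : ℕ → (D → D)) (hσF : ∀ n, σ n ∈ F)
    (hfair : ∀ f ∈ F, ∀ N : ℕ, ∃ n ≥ N, σ n = f)
    (e : ℕ → D) (he0 : e 0 = ⊥) (hestep : ∀ n, e (n + 1) = σ n (e n)) :
    ∃ N : ℕ, (∀ n ≥ N, e n = e N) ∧
      (∀ f ∈ F, f (e N) = e N) ∧
      (∀ d : D, (∀ f ∈ F, f d = d) → e N ≤ d) := by
  have he_mono : Monotone e :=
    monotone_of_iterate_inflationary (fun n => hinfl _ (hσF n)) hestep
  obtain ⟨N, hN⟩ := WellFoundedGT.monotone_chain_condition ⟨e, he_mono⟩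
  have hstable : ∀ n ≥ N, e n = e N := fun n hn => (hN n hn).symm
  refine ⟨N, hstable, fun f hf => ?_, fun d hd => ?_⟩
  · obtain ⟨n, hn, hσn⟩ := hfair f hf N
    exact apply_eq_of_iterate_stable hestep hstable hn hσn
  · exact iterate_le_of_forall_fixed (he0 ▸ bot_le) (fun n => hmono _ (hσF n))
      (fun n => hd _ (hσF n)) hestep N

/-- On a finite partial order with ⊥, the common fixpoints of a finite set of
monotonic inflationary functions have a least element, namely the limit of any
fair iteration starting at ⊥. -/
theorem least_common_fixpoint_of_fair_iteration {D : Type*} [PartialOrder D]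
    [Fintype D] [OrderBot D]
    (F : Set (D → D)) (hF : F.Finite)
    (hmono : ∀ f ∈ F, Monotone f) (hinfl : ∀ f ∈ F, ∀ x, x ≤ f x)
    (σ : ℕ → (D → D)) (hσF : ∀ n, σ n ∈ F)
    (hfair : ∀ f ∈ F, ∀ N : ℕ, ∃ n ≥ N, σ n = f)
    (e : ℕ → D) (he0 : e 0 = ⊥) (hestep : ∀ n, e (n + 1) = σ n (e n)) :
    ∃ N : ℕ, (∀ n ≥ N, e n = e N) ∧
      (∀ f ∈ F, f (e N) = e N) ∧
      (∀ d : D, (∀ f ∈ F, f d = d) → e N ≤ d) :=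
  least_common_fixpoint_of_fair_iteration_general F hmono hinfl σ hσF hfair e he0 hestep
end

section
/- Let (D, ⊑) be a finite partial order with least element and let F be a finite set of monotonic inflationary functions on D. If d and d' are both obtained as the final element of a stabilizing iteration of functions from F starting at the same element d₀ (i.e., d and d' are common fixpoints of F reachable from d₀ by finitely many applications of functions in F), then d = d'. -/
/-!
Every element reachable from `d₀` lies above `d₀`, because the functions are inflationary,
and below every common fixpoint that lies above `d₀`, because monotone maps preserve the set
`{x | x ≤ e}` of a fixpoint `e`. Hence two reachable common fixpoints lie below each other.
-/

namespace List

variable {α : Type*} [Preorder α]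

theorem le_foldl_apply_of_le_apply {l : List (α → α)} (hl : ∀ f ∈ l, ∀ x, x ≤ f x) (x : α) :
    x ≤ l.foldl (fun y f => f y) x := by
  induction l generalizing x with
  | nil => exact le_rfl
  | cons g l ih =>
    rw [forall_mem_cons] at hl
    exact (hl.1 x).trans (ih hl.2 (g x))

theorem foldl_apply_le_of_apply_le {l : List (α → α)} {x e : α}
    (hmono : ∀ f ∈ l, Monotone f) (he : ∀ f ∈ l, f e ≤ e) (hx : x ≤ e) :
    l.foldl (fun y f => f y) x ≤ e := by
  induction l generalizing x with
  | nil => exact hx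
  | cons g l ih =>
    rw [forall_mem_cons] at hmono he
    exact ih hmono.2 he.2 ((hmono.1 hx).trans he.1)

end List

theorem stabilizing_iterations_unique_outcome_general {D : Type*} [PartialOrder D]
    (F : Set (D → D))
    (hmono : ∀ f ∈ F, Monotone f) (hinfl : ∀ f ∈ F, ∀ x, x ≤ f x)
    (d₀ d d' : D)
    (l l' : List (D → D)) (hl : ∀ f ∈ l, f ∈ F) (hl' : ∀ f ∈ l', f ∈ F)
    (hd : d = l.foldl (fun x f => f x) d₀) (hd' : d' = l'.foldl (fun x f => f x) d₀)
    (hfix : ∀ f ∈ F, f d = d) (hfix' : ∀ f ∈ F, f d' = d') :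
    d = d' := by
  have hd₀ : d₀ ≤ d := hd ▸ List.le_foldl_apply_of_le_apply (fun f hf => hinfl f (hl f hf)) d₀
  have hd₀' : d₀ ≤ d' := hd' ▸ List.le_foldl_apply_of_le_apply (fun f hf => hinfl f (hl' f hf)) d₀
  apply le_antisymm
  · exact hd ▸ List.foldl_apply_le_of_apply_le (fun f hf => hmono f (hl f hf))
      (fun f hf => (hfix' f (hl f hf)).le) hd₀'
  · exact hd' ▸ List.foldl_apply_le_of_apply_le (fun f hf => hmono f (hl' f hf))
      (fun f hf => (hfix f (hl' f hf)).le) hd₀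

/-- On a finite partial order with a least element, any two common fixpoints of a
finite set F of monotonic inflationary functions that are reachable from the same
element d₀ by finitely many applications of functions from F coincide. -/
theorem stabilizing_iterations_unique_outcome {D : Type*} [PartialOrder D]
    [Fintype D] [OrderBot D]
    (F : Set (D → D)) (hF : F.Finite)
    (hmono : ∀ f ∈ F, Monotone f) (hinfl : ∀ f ∈ F, ∀ x, x ≤ f x)
    (d₀ d d' : D)
    (l l' : List (D → D)) (hl : ∀ f ∈ l, f ∈ F) (hl' : ∀ f ∈ l', f ∈ F)
    (hd : d = l.foldl (fun x f => f x) d₀) (hd' : d' = l'.foldl (fun x f => f x) d₀)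
    (hfix : ∀ f ∈ F, f d = d) (hfix' : ∀ f ∈ F, f d' = d') :
    d = d' :=
  stabilizing_iterations_unique_outcome_general F hmono hinfl d₀ d d' l l' hl hl' hd hd' hfix hfix'
end

section
/- On the product of finite partial orders (D₁,⊑₁), …, (Dₙ,⊑ₙ) each with a least element, ordered componentwise, if each function g in a finite family F acts only on the coordinates in its scheme s (leaving the others unchanged) and is monotonic and inflationary on those coordinates, then g is monotonic and inflationary on the full product order; consequently its iteration from the bottom element terminates in the least common fixpoint of F. -/
/-!
Outside its scheme a function is the identity, so monotonicity and inflationarity on the scheme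
coordinates extend to the whole product. The iterates from `⊥` then form an increasing chain in a
finite order, which stabilizes; fairness makes the limit a fixpoint of every `f ∈ F`, and
monotonicity keeps every iterate below any common fixpoint.
-/

section Scheme

variable {ι : Type*} {α : ι → Type*} [∀ i, Preorder (α i)] {g : (∀ i, α i) → ∀ i, α i}
  {s : Set ι}

theorem monotone_of_monotone_on_scheme (hout : ∀ d, ∀ i ∉ s, g d i = d i)
    (hmono : ∀ d e, (∀ i ∈ s, d i ≤ e i) → ∀ i ∈ s, g d i ≤ g e i) : Monotone g := by
  intro d e hde i
  by_cases hi : i ∈ s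
  · exact hmono d e (fun j _ => hde j) i hi
  · rw [hout d i hi, hout e i hi]
    exact hde i

theorem le_apply_of_inflationary_on_scheme (hout : ∀ d, ∀ i ∉ s, g d i = d i)
    (hinfl : ∀ d, ∀ i ∈ s, d i ≤ g d i) (d : ∀ i, α i) : d ≤ g d := by
  intro i
  by_cases hi : i ∈ s
  · exact hinfl d i hi
  · exact (hout d i hi).ge

end Scheme

section GenericIteration

variable {α : Type*} {F : Set (α → α)} {σ : ℕ → α → α} {e : ℕ → α}

theorem apply_eq_of_fair_of_stable (hfair : ∀ f ∈ F, ∀ N : ℕ, ∃ m ≥ N, σ m = f)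
    (hstep : ∀ m, e (m + 1) = σ m (e m)) {N : ℕ} (hstab : ∀ m ≥ N, e m = e N) :
    ∀ f ∈ F, f (e N) = e N := by
  intro f hf
  obtain ⟨m, hm, rfl⟩ := hfair f hf N
  calc σ m (e N) = σ m (e m) := by rw [hstab m hm]
    _ = e (m + 1) := (hstep m).symm
    _ = e N := hstab (m + 1) (by omega)

variable [Preorder α]

theorem monotone_of_inflationary_steps (hinfl : ∀ m d, d ≤ σ m d)
    (hstep : ∀ m, e (m + 1) = σ m (e m)) : Monotone e :=
  monotone_nat_of_le_succ fun m => by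
    rw [hstep m]
    exact hinfl m (e m)

theorem le_of_monotone_steps_of_fixedPt [OrderBot α] (hmono : ∀ m, Monotone (σ m))
    (he0 : e 0 = ⊥) (hstep : ∀ m, e (m + 1) = σ m (e m)) {d : α} (hd : ∀ m, σ m d = d) :
    ∀ m, e m ≤ d
  | 0 => he0 ▸ bot_le
  | m + 1 =>
    calc e (m + 1) = σ m (e m) := hstep m
      _ ≤ σ m d := hmono m (le_of_monotone_steps_of_fixedPt hmono he0 hstep hd m)
      _ = d := hd m

end GenericIteration

theorem exists_stable_leastCommonFixedPt_of_fair {α : Type*} [PartialOrder α] [OrderBot α]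
    [WellFoundedGT α] {F : Set (α → α)} {σ : ℕ → α → α} {e : ℕ → α}
    (hF : ∀ f ∈ F, Monotone f ∧ ∀ d, d ≤ f d) (hσ : ∀ m, σ m ∈ F)
    (hfair : ∀ f ∈ F, ∀ N : ℕ, ∃ m ≥ N, σ m = f) (he0 : e 0 = ⊥)
    (hstep : ∀ m, e (m + 1) = σ m (e m)) :
    ∃ N : ℕ, (∀ m ≥ N, e m = e N) ∧ (∀ f ∈ F, f (e N) = e N) ∧
      ∀ d, (∀ f ∈ F, f d = d) → e N ≤ d := by
  have he : Monotone e := monotone_of_inflationary_steps (fun m => (hF _ (hσ m)).2) hstep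
  obtain ⟨N, hN⟩ := WellFoundedGT.monotone_chain_condition ⟨e, he⟩
  have hstab : ∀ m ≥ N, e m = e N := fun m hm => (hN m hm).symm
  refine ⟨N, hstab, apply_eq_of_fair_of_stable hfair hstep hstab, fun d hd => ?_⟩
  exact le_of_monotone_steps_of_fixedPt (fun m => (hF _ (hσ m)).1) he0 hstep
    (fun m => hd _ (hσ m)) N

theorem compound_domains_generic_iteration_general {n : ℕ} {D : Fin n → Type*}
    [∀ i, PartialOrder (D i)] [∀ i, Fintype (D i)] [∀ i, OrderBot (D i)]
    (F : Set ((∀ i, D i) → (∀ i, D i)))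
    (scheme : ((∀ i, D i) → (∀ i, D i)) → Set (Fin n))
    (houtside : ∀ g ∈ F, ∀ d, ∀ i, i ∉ scheme g → g d i = d i)
    (hmono : ∀ g ∈ F, ∀ d e, (∀ i ∈ scheme g, d i ≤ e i) →
      ∀ i ∈ scheme g, g d i ≤ g e i)
    (hinfl : ∀ g ∈ F, ∀ d, ∀ i ∈ scheme g, d i ≤ g d i) :
    (∀ g ∈ F, Monotone g ∧ ∀ d, d ≤ g d) ∧
    (∀ (σ : ℕ → ((∀ i, D i) → (∀ i, D i))), (∀ n, σ n ∈ F) →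
      (∀ f ∈ F, ∀ N : ℕ, ∃ m ≥ N, σ m = f) →
      ∀ (e : ℕ → ∀ i, D i), e 0 = ⊥ → (∀ m, e (m + 1) = σ m (e m)) →
      ∃ N : ℕ, (∀ m ≥ N, e m = e N) ∧ (∀ f ∈ F, f (e N) = e N) ∧
        ∀ d : ∀ i, D i, (∀ f ∈ F, f d = d) → e N ≤ d) := by
  have hF : ∀ g ∈ F, Monotone g ∧ ∀ d, d ≤ g d := fun g hg =>
    ⟨monotone_of_monotone_on_scheme (houtside g hg) (hmono g hg),
      le_apply_of_inflationary_on_scheme (houtside g hg) (hinfl g hg)⟩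
  exact ⟨hF, fun σ hσ hfair e he0 hstep =>
    exists_stable_leastCommonFixedPt_of_fair hF hσ hfair he0 hstep⟩

/-- On a finite product of finite partial orders with least elements, functions
acting monotonically and inflationarily on their scheme only (identity outside)
are monotonic and inflationary on the whole product; consequently every fair
iteration of a finite family F of such functions from ⊥ stabilizes at the least
common fixpoint of F. -/
theorem compound_domains_generic_iteration {n : ℕ} {D : Fin n → Type*}
    [∀ i, PartialOrder (D i)] [∀ i, Fintype (D i)] [∀ i, OrderBot (D i)]
    (F : Set ((∀ i, D i) → (∀ i, D i))) (hF : F.Finite)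
    (scheme : ((∀ i, D i) → (∀ i, D i)) → Set (Fin n))
    (houtside : ∀ g ∈ F, ∀ d, ∀ i, i ∉ scheme g → g d i = d i)
    (hdep : ∀ g ∈ F, ∀ d e, (∀ i ∈ scheme g, d i = e i) →
      ∀ i ∈ scheme g, g d i = g e i)
    (hmono : ∀ g ∈ F, ∀ d e, (∀ i ∈ scheme g, d i ≤ e i) →
      ∀ i ∈ scheme g, g d i ≤ g e i)
    (hinfl : ∀ g ∈ F, ∀ d, ∀ i ∈ scheme g, d i ≤ g d i) :
    (∀ g ∈ F, Monotone g ∧ ∀ d, d ≤ g d) ∧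
    (∀ (σ : ℕ → ((∀ i, D i) → (∀ i, D i))), (∀ n, σ n ∈ F) →
      (∀ f ∈ F, ∀ N : ℕ, ∃ m ≥ N, σ m = f) →
      ∀ (e : ℕ → ∀ i, D i), e 0 = ⊥ → (∀ m, e (m + 1) = σ m (e m)) →
      ∃ N : ℕ, (∀ m ≥ N, e m = e N) ∧ (∀ f ∈ F, f (e N) = e N) ∧
        ∀ d : ∀ i, D i, (∀ f ∈ F, f d = d) → e N ≤ d) :=
  compound_domains_generic_iteration_general F scheme houtside hmono hinfl
end
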